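/- Let n ≥ 2, m ≥ 1, and let A = (Q, π) be an automaton over Fin n. Then A is synchronizing at level m and core if and only if there exists a surjection f : (Fin n)^m → Q such that π x (f (v₁, …, v_m)) = f (v₂, …, v_m, x) for all (v₁, …, v_m) ∈ (Fin n)^m and all x ∈ Fin n; equivalently, if and only if A is the folded automaton of a folding of the de Bruijn graph G(n, m). -/

import Mathlib

/-- The one-sided shift map on `(Fin n)^ℕ`: `(σ x) i = x (i+1)`. -/
def shiftMap (n : ℕ) : (ℕ → Fin n) → (ℕ → Fin n) := fun x i => x (i + 1)

/-- `b` has orbit length exactly `N` under `f`: `N` is the least `L ≥ 1` with `f^[L] b = b`. -/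
def HasOrbitLen {β : Type*} (f : β → β) (b : β) (N : ℕ) : Prop :=
  IsLeast {L : ℕ | 0 < L ∧ f^[L] b = b} N

/-- An automorphism of the one-sided shift: a homeomorphism commuting with the shift. -/
def IsShiftAut (n : ℕ) (φ : (ℕ → Fin n) ≃ₜ (ℕ → Fin n)) : Prop :=
  ⇑φ ∘ shiftMap n = shiftMap n ∘ ⇑φ

/-- `φ` has finite order. -/
def FiniteOrderAut (n : ℕ) (φ : (ℕ → Fin n) ≃ₜ (ℕ → Fin n)) : Prop :=
  ∃ m : ℕ, 0 < m ∧ (⇑φ)^[m] = id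

/-- Extension of the transition function of an automaton to words (letters read in order). -/
def transStar {n : ℕ} {Q : Type*} (π : Fin n → Q → Q) : List (Fin n) → Q → Q
  | [], q => q
  | x :: w, q => transStar π w (π x q)

/-- The automaton `(Q, π)` is synchronizing at level `k` with synchronizing map `s`. -/
def SyncAtLevelWith {n : ℕ} {Q : Type*} (π : Fin n → Q → Q) (k : ℕ)
    (s : List (Fin n) → Q) : Prop :=
  ∀ w : List (Fin n), w.length = k → ∀ q : Q, transStar π w q = s w

/-- The synchronizing map `s` at level `k` is surjective (the automaton is core). -/
def CoreAt {n : ℕ} {Q : Type*} (s : List (Fin n) → Q) (k : ℕ) : Prop :=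
  ∀ q : Q, ∃ w : List (Fin n), w.length = k ∧ s w = q

/-- An automorphism of the underlying digraph of the automaton `(Q, π)`. -/
structure DigraphAut {Q : Type*} (n : ℕ) (π : Fin n → Q → Q) where
  α : Q ≃ Q
  lab : Q → Equiv.Perm (Fin n)
  compat : ∀ (x : Fin n) (q : Q), π (lab q x) (α q) = α (π x q)

/-- Action of a digraph automorphism on the edge set `Q × Fin n`. -/
def edgeMap {Q : Type*} {n : ℕ} {π : Fin n → Q → Q} (Φ : DigraphAut n π) :
    Q × Fin n → Q × Fin n :=
  fun e => (Φ.α e.1, Φ.lab e.1 e.2)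

/-- The output word map `Λ` of a digraph automorphism. -/
def outWord {Q : Type*} {n : ℕ} (π : Fin n → Q → Q) (lab : Q → Equiv.Perm (Fin n)) :
    List (Fin n) → Q → List (Fin n)
  | [], _ => []
  | x :: w, q => lab q x :: outWord π lab w (π x q)

/-- Action of a digraph automorphism on based circuits: `(q, w) ↦ (α q, Λ(w, q))`. -/
def circMap {Q : Type*} {n : ℕ} {π : Fin n → Q → Q} (Φ : DigraphAut n π) :
    Q × List (Fin n) → Q × List (Fin n) :=
  fun c => (Φ.α c.1, outWord π Φ.lab c.2 c.1)

/-- `(q, w)` is a based circuit: `w` nonempty and `π*(w, q) = q`. -/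
def IsBasedCircuit {Q : Type*} {n : ℕ} (π : Fin n → Q → Q) (c : Q × List (Fin n)) : Prop :=
  c.2 ≠ [] ∧ transStar π c.2 c.1 = c.1

/-- The sliding block code induced by an automaton synchronizing at level `k`
with synchronizing map `s` and digraph automorphism with labelling `lab`:
`(F x) i = lab q_i (x i)` where `q_i = s [x(i+k), x(i+k-1), …, x(i+1)]`. -/
def inducedMap {Q : Type*} {n : ℕ} (k : ℕ) (s : List (Fin n) → Q)
    (lab : Q → Equiv.Perm (Fin n)) : (ℕ → Fin n) → (ℕ → Fin n) :=
  fun x i => lab (s (List.ofFn fun j : Fin k => x (i + k - (j : ℕ)))) (x i)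

/-- `(A, Φ)` (with `A` synchronizing and core) is a support of the shift automorphism `φ`. -/
def IsSupport {Q : Type*} (n : ℕ) (π : Fin n → Q → Q) (Φ : DigraphAut n π)
    (φ : (ℕ → Fin n) ≃ₜ (ℕ → Fin n)) : Prop :=
  ∃ (k : ℕ) (s : List (Fin n) → Q), SyncAtLevelWith π k s ∧ CoreAt s k ∧
    inducedMap k s Φ.lab = ⇑φ

/-- The permutation automorphism of the shift induced by a permutation of `Fin n`. -/
def permAutMap {n : ℕ} (ρ : Equiv.Perm (Fin n)) : (ℕ → Fin n) → (ℕ → Fin n) :=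
  fun x i => ρ (x i)

/-- `t` is heavy for `(A, Φ, N)` with divisibility constant `b`. -/
def Heavy {Q : Type*} {n : ℕ} (π : Fin n → Q → Q) (Φ : DigraphAut n π)
    (N b : ℕ) (t : Q) : Prop :=
  b ∣ N ∧ b ≠ N ∧ (∀ r : ℕ, HasOrbitLen (⇑Φ.α) t r → r ∣ b) ∧
  ∀ (q : Q) (x : Fin n), π x q = t →
    ∀ L : ℕ, HasOrbitLen (edgeMap Φ) (q, x) L → Nat.lcm L b = N

lemma transStar_append {n : ℕ} {Q : Type*} (π : Fin n → Q → Q) (w₁ w₂ : List (Fin n)) (q : Q) :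
    transStar π (w₁ ++ w₂) q = transStar π w₂ (transStar π w₁ q) := by
  induction w₁ generalizing q with
  | nil => rfl
  | cons a t ih => simp [transStar, ih]

/-- push one letter on a de Bruijn state -/
def dbPush {n m : ℕ} (x : Fin n) (v : Fin m → Fin n) : Fin m → Fin n :=
  fun j : Fin m => if h : (j : ℕ) + 1 < m then v ⟨(j : ℕ) + 1, h⟩ else x

def dbPushWord {n m : ℕ} (w : List (Fin n)) (v : Fin m → Fin n) : Fin m → Fin n :=
  w.foldl (fun v x => dbPush x v) v

lemma dbPushWord_nil {n m : ℕ} (v : Fin m → Fin n) : dbPushWord [] v = v := rfl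

lemma dbPushWord_cons {n m : ℕ} (x : Fin n) (w : List (Fin n)) (v : Fin m → Fin n) :
    dbPushWord (x :: w) v = dbPushWord w (dbPush x v) := rfl

lemma dbPushWord_spec {n m : ℕ} (w : List (Fin n)) (v : Fin m → Fin n) (j : Fin m) :
    dbPushWord w v j =
      if h : (j : ℕ) + w.length < m then v ⟨(j : ℕ) + w.length, h⟩
      else w[(j : ℕ) + w.length - m]'(by have := j.isLt; simp at h; omega) := by
  induction w generalizing v with
  | nil => simp [dbPushWord_nil]
  | cons a t ih =>
    rw [dbPushWord_cons, ih]
    by_cases h1 : (j : ℕ) + t.length < m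
    · rw [dif_pos h1]
      unfold dbPush
      by_cases h2 : (j : ℕ) + t.length + 1 < m
      · rw [dif_pos h2, dif_pos (by simp; omega)]
        congr 1
      · rw [dif_neg h2, dif_neg (by simp; omega)]
        have hz : (j : ℕ) + (t.length + 1) - m = 0 := by omega
        simp [List.getElem_cons, hz]
    · rw [dif_neg h1, dif_neg (by simp; omega)]
      have hk : (j : ℕ) + (t.length + 1) - m = ((j : ℕ) + t.length - m) + 1 := by
        have := j.isLt; omega
      simp [List.getElem_cons, hk]

lemma transStar_f {n m : ℕ} {Q : Type*} (π : Fin n → Q → Q) (f : (Fin m → Fin n) → Q)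
    (hf : ∀ (v : Fin m → Fin n) (x : Fin n), π x (f v) = f (dbPush x v))
    (w : List (Fin n)) (v : Fin m → Fin n) :
    transStar π w (f v) = f (dbPushWord w v) := by
  induction w generalizing v with
  | nil => rfl
  | cons a t ih => simp [transStar, dbPushWord_cons, hf, ih]

lemma transStar_concat {n : ℕ} {Q : Type*} (π : Fin n → Q → Q) (w : List (Fin n))
    (x : Fin n) (q : Q) : transStar π (w ++ [x]) q = π x (transStar π w q) := by
  rw [transStar_append]; rfl

lemma ofFn_append_single {n k : ℕ} (v : Fin (k + 1) → Fin n) (x : Fin n) :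
    List.ofFn v ++ [x] = v 0 :: List.ofFn (dbPush x v) := by
  apply List.ext_getElem
  · simp
  · intro i h1 h2
    simp only [List.length_append, List.length_ofFn, List.length_singleton] at h1
    match i with
    | 0 => simp
    | Nat.succ i =>
      simp only [List.getElem_cons_succ, List.getElem_ofFn]
      by_cases hik : i + 1 < k + 1
      · rw [List.getElem_append_left (by simp; omega)]
        simp only [List.getElem_ofFn, dbPush]
        rw [dif_pos (by simpa using hik)]
      · have hik' : i = k := by omega
        subst hik'
        rw [List.getElem_append_right (by simp)]
        simp [dbPush]

theorem sync_core_iff_folding_of_deBruijn (n m : ℕ) (hn : 2 ≤ n) (hm : 1 ≤ m)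
    (Q : Type) [Fintype Q] [Nonempty Q] (π : Fin n → Q → Q) :
    (∃ s : List (Fin n) → Q, SyncAtLevelWith π m s ∧ CoreAt s m) ↔
      (∃ f : (Fin m → Fin n) → Q, Function.Surjective f ∧
        ∀ (v : Fin m → Fin n) (x : Fin n),
          π x (f v) =
            f (fun j : Fin m =>
              if h : (j : ℕ) + 1 < m then v ⟨(j : ℕ) + 1, h⟩ else x)) := by
  classical
  constructor
  · rintro ⟨s, hs, hc⟩
    refine ⟨fun v => s (List.ofFn v), ?_, ?_⟩
    · intro q
      obtain ⟨w, hw, hsw⟩ := hc q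
      refine ⟨fun j => w.get (Fin.cast hw.symm j), ?_⟩
      have hofn : List.ofFn (fun j : Fin m => w.get (Fin.cast hw.symm j)) = w := by
        apply List.ext_getElem <;> simp [hw]
      show s (List.ofFn fun j : Fin m => w.get (Fin.cast hw.symm j)) = q
      rw [hofn, hsw]
    · intro v x
      obtain ⟨q₀⟩ := ‹Nonempty Q›
      obtain ⟨k, rfl⟩ : ∃ k, m = k + 1 := ⟨m - 1, by omega⟩
      show π x (s (List.ofFn v)) = s (List.ofFn (dbPush x v))
      have h1 : s (List.ofFn v) = transStar π (List.ofFn v) q₀ :=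
        (hs _ (by simp) q₀).symm
      rw [h1,
        show π x (transStar π (List.ofFn v) q₀) = transStar π (List.ofFn v ++ [x]) q₀ from
          (transStar_concat π _ x q₀).symm,
        ofFn_append_single]
      show transStar π (List.ofFn (dbPush x v)) (π (v 0) q₀) = _
      exact hs _ (by simp) _
  · rintro ⟨f, hf, hcompat⟩
    have hcompat' : ∀ (v : Fin m → Fin n) (x : Fin n), π x (f v) = f (dbPush x v) :=
      hcompat
    set s : List (Fin n) → Q := fun w =>
      if h : w.length = m then f (fun j => w.get (Fin.cast h.symm j))
      else f (fun _ => ⟨0, by omega⟩) with hs_def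
    have hs_eq : ∀ (w : List (Fin n)) (h : w.length = m),
        s w = f (fun j => w.get (Fin.cast h.symm j)) := by
      intro w h
      simp only [hs_def, dif_pos h]
    refine ⟨s, ?_, ?_⟩
    · intro w hw q
      obtain ⟨u, rfl⟩ := hf q
      rw [transStar_f π f hcompat', hs_eq w hw]
      congr 1
      funext j
      rw [dbPushWord_spec]
      rw [dif_neg (by have := j.isLt; omega)]
      simp [hw, List.get_eq_getElem]
    · intro q
      obtain ⟨u, rfl⟩ := hf q
      refine ⟨List.ofFn u, by simp, ?_⟩
      rw [hs_eq _ (by simp)]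
      congr 1
      funext j
      simp
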